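/- The number of minimum [1,2]-sets of a tree on n vertices is not polynomially bounded in n: for all natural numbers C and d there exists k ≥ 1 such that the spider tree T_k (a tree on n = 3k+1 vertices) has more than C · (3k+1)^d distinct [1,2]-sets of minimum cardinality. -/

import Mathlib

open scoped Classical

/-- Boolean adjacency of the spider tree `T_k`: root `none`, and branch
vertices `some (i, 0) = a_i`, `some (i, 1) = b_i`, `some (i, 2) = c_i`,
with edges `r–a_i`, `a_i–b_i`, `b_i–c_i`. -/
def spiderAdj (k : ℕ) : Option (Fin k × Fin 3) → Option (Fin k × Fin 3) → Bool
  | none, some (_, j) => decide (j = 0)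
  | some (_, j), none => decide (j = 0)
  | some (i, j), some (i', j') =>
      decide (i = i') && (decide ((j : ℕ) + 1 = (j' : ℕ)) || decide ((j' : ℕ) + 1 = (j : ℕ)))
  | none, none => false

/-- The spider tree `T_k` on `3k+1` vertices. -/
def spider (k : ℕ) : SimpleGraph (Option (Fin k × Fin 3)) where
  Adj x y := spiderAdj k x y = true
  symm := by
    constructor
    rintro (_ | ⟨i, j⟩) (_ | ⟨i', j'⟩) h <;> simp [spiderAdj] at h ⊢
    · exact h
    · exact h
    · exact ⟨h.1.symm, h.2.symm⟩
  loopless := by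
    constructor
    rintro (_ | ⟨i, j⟩) h <;> simp [spiderAdj] at h

instance (k : ℕ) : DecidableRel (spider k).Adj :=
  fun x y => inferInstanceAs (Decidable (spiderAdj k x y = true))

/-- `S` is a `[1,2]`-set of `G`: every vertex outside `S` has at least one and
at most two neighbors in `S`. -/
def IsOneTwoSet {V : Type*} [Fintype V] [DecidableEq V] (G : SimpleGraph V)
    [DecidableRel G.Adj] (S : Finset V) : Prop :=
  ∀ v, v ∉ S → 1 ≤ (G.neighborFinset v ∩ S).card ∧ (G.neighborFinset v ∩ S).card ≤ 2


/-!
A `[1,2]`-set of `T_k` contains `b_i` or `c_i` for every branch `i` (otherwise `c_i` is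
undominated), and also the root or some `a_i` (otherwise the root is undominated); these are
`k + 1` distinct vertices. Conversely, the root together with one of `b_i`, `c_i` from every
branch is a `[1,2]`-set of size `k + 1`, the upper bound being automatic because all non-root
vertices have degree at most `2`. The `2 ^ k` such choices outgrow every polynomial in `3k + 1`.
-/

open Finset

section OneTwoSet

variable {V : Type*} [Fintype V] [DecidableEq V] {G : SimpleGraph V} [DecidableRel G.Adj]
  {S : Finset V}

lemma IsOneTwoSet.exists_adj_mem (hS : IsOneTwoSet G S) {v : V} (hv : v ∉ S) :
    ∃ w ∈ S, G.Adj v w := by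
  obtain ⟨w, hw⟩ := card_pos.mp (hS v hv).1
  rw [mem_inter, SimpleGraph.mem_neighborFinset] at hw
  exact ⟨w, hw.2, hw.1⟩

lemma isOneTwoSet_of_forall_notMem (h : ∀ v ∉ S, (∃ w ∈ S, G.Adj v w) ∧ G.degree v ≤ 2) :
    IsOneTwoSet G S := by
  intro v hv
  obtain ⟨⟨w, hwS, hvw⟩, hdeg⟩ := h v hv
  refine ⟨card_pos.mpr ⟨w, mem_inter.mpr ⟨(G.mem_neighborFinset v w).mpr hvw, hwS⟩⟩, ?_⟩
  exact (card_le_card inter_subset_left).trans hdeg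

end OneTwoSet

lemma exists_mul_pow_lt_two_pow (C a d : ℕ) : ∃ k, 1 ≤ k ∧ C * (a * k + 1) ^ d < 2 ^ k := by
  set m := C * (a + 1) ^ d * (d + 1) ^ d + 1
  have hk : 1 ≤ (d + 1) * m := Nat.one_le_iff_ne_zero.mpr (by positivity)
  refine ⟨(d + 1) * m, hk, ?_⟩
  calc C * (a * ((d + 1) * m) + 1) ^ d ≤ C * ((a + 1) * ((d + 1) * m)) ^ d := by
        gcongr
        rw [add_one_mul]
        linarith
    _ = C * (a + 1) ^ d * (d + 1) ^ d * m ^ d := by rw [mul_pow, mul_pow]; ring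
    _ < m * m ^ d := by gcongr; omega
    _ = m ^ (d + 1) := by ring
    _ < (2 ^ m) ^ (d + 1) := by gcongr; exact Nat.lt_two_pow_self
    _ = 2 ^ ((d + 1) * m) := by rw [← pow_mul, mul_comm]

namespace Spider

variable {k : ℕ}

@[simp]
lemma adj_none_some (i : Fin k) (j : Fin 3) : (spider k).Adj none (some (i, j)) ↔ j = 0 := by
  simp [spider, spiderAdj]

@[simp]
lemma adj_some_none (i : Fin k) (j : Fin 3) : (spider k).Adj (some (i, j)) none ↔ j = 0 := by
  simp [spider, spiderAdj]

@[simp]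
lemma adj_some_some (i i' : Fin k) (j j' : Fin 3) :
    (spider k).Adj (some (i, j)) (some (i', j')) ↔
      i = i' ∧ ((j : ℕ) + 1 = j' ∨ (j' : ℕ) + 1 = j) := by
  simp [spider, spiderAdj]

lemma neighborFinset_zero (i : Fin k) :
    (spider k).neighborFinset (some (i, 0)) = {none, some (i, 1)} := by
  ext (_ | ⟨i', j'⟩)
  · simp
  · fin_cases j' <;> simp [eq_comm]

lemma neighborFinset_one (i : Fin k) :
    (spider k).neighborFinset (some (i, 1)) = {some (i, 0), some (i, 2)} := by
  ext (_ | ⟨i', j'⟩)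
  · simp
  · fin_cases j' <;> simp [eq_comm]

lemma neighborFinset_two (i : Fin k) :
    (spider k).neighborFinset (some (i, 2)) = {some (i, 1)} := by
  ext (_ | ⟨i', j'⟩)
  · simp
  · fin_cases j' <;> simp [eq_comm]

lemma card_le_of_forall_exists_adj {S : Finset (Option (Fin k × Fin 3))}
    (hS : ∀ v ∉ S, ∃ w ∈ S, (spider k).Adj v w) : k + 1 ≤ #S := by
  have hbranch : ∀ i : Fin k, ∃ j : Fin 3, j ≠ 0 ∧ some (i, j) ∈ S := by
    intro i
    by_cases hc : some (i, 2) ∈ S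
    · exact ⟨2, by decide, hc⟩
    · obtain ⟨w, hwS, hw⟩ := hS _ hc
      rw [← SimpleGraph.mem_neighborFinset, neighborFinset_two, mem_singleton] at hw
      exact ⟨1, by decide, hw ▸ hwS⟩
  have hroot : ∃ v ∈ S, ∀ i j, v = some (i, j) → j = 0 := by
    by_cases hr : none ∈ S
    · exact ⟨none, hr, by simp⟩
    · obtain ⟨_ | ⟨i, j⟩, hwS, hw⟩ := hS none hr
      · exact absurd hw (SimpleGraph.irrefl _)
      · exact ⟨_, hwS, by simp_all⟩
  choose g hg0 hgS using hbranch
  obtain ⟨e, heS, he⟩ := hroot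
  let φ : Option (Fin k) → Option (Fin k × Fin 3) := fun o => o.elim e fun i => some (i, g i)
  calc k + 1 = #(univ : Finset (Option (Fin k))) := by simp
    _ ≤ #S := card_le_card_of_injOn φ (by rintro (_ | i) - <;> simp [φ, heS, hgS])
      (by
        rintro (_ | i) - (_ | i') - h
        · rfl
        · exact absurd (he i' _ h) (hg0 i')
        · exact absurd (he i _ h.symm) (hg0 i)
        · simp only [φ, Option.elim, Option.some.injEq, Prod.mk.injEq] at h
          rw [h.1])

/-- The root together with `b_i` (if `f i = 0`) or `c_i` (if `f i = 1`) from each branch. -/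
def oneTwoSetOfChoice (f : Fin k → Fin 2) : Finset (Option (Fin k × Fin 3)) :=
  insert none (univ.image fun i => some (i, (f i).succ))

@[simp]
lemma none_mem_oneTwoSetOfChoice (f : Fin k → Fin 2) : none ∈ oneTwoSetOfChoice f :=
  mem_insert_self _ _

@[simp]
lemma some_mem_oneTwoSetOfChoice (f : Fin k → Fin 2) (i : Fin k) (j : Fin 3) :
    some (i, j) ∈ oneTwoSetOfChoice f ↔ j = (f i).succ := by
  simp [oneTwoSetOfChoice, eq_comm]

lemma card_oneTwoSetOfChoice (f : Fin k → Fin 2) : #(oneTwoSetOfChoice f) = k + 1 := by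
  rw [oneTwoSetOfChoice, card_insert_of_notMem (by simp),
    card_image_of_injective _ fun _ _ h => congrArg Prod.fst (Option.some.inj h), card_univ,
    Fintype.card_fin]

lemma oneTwoSetOfChoice_injective : Function.Injective (oneTwoSetOfChoice (k := k)) := by
  intro f g hfg
  funext i
  have h : some (i, (f i).succ) ∈ oneTwoSetOfChoice g := by simp [← hfg]
  exact Fin.succ_injective 2 ((some_mem_oneTwoSetOfChoice g i _).mp h)

lemma degree_some_le_two (x : Fin k × Fin 3) : (spider k).degree (some x) ≤ 2 := by
  obtain ⟨i, j⟩ := x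
  rw [← SimpleGraph.card_neighborFinset_eq_degree]
  fin_cases j
  · exact (neighborFinset_zero i).symm ▸ card_le_two
  · exact (neighborFinset_one i).symm ▸ card_le_two
  · simp [neighborFinset_two]

lemma isOneTwoSet_oneTwoSetOfChoice (f : Fin k → Fin 2) :
    IsOneTwoSet (spider k) (oneTwoSetOfChoice f) := by
  refine isOneTwoSet_of_forall_notMem fun v hv => ?_
  obtain _ | ⟨i, j⟩ := v
  · simp at hv
  refine ⟨?_, degree_some_le_two _⟩
  rw [some_mem_oneTwoSetOfChoice] at hv
  fin_cases j
  · exact ⟨none, by simp, by simp⟩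
  · have hc : (f i).succ = 2 := by generalize f i = c at hv ⊢; revert c; decide
    exact ⟨some (i, 2), by simp [hc], by simp⟩
  · have hc : (f i).succ = 1 := by generalize f i = c at hv ⊢; revert c; decide
    exact ⟨some (i, 1), by simp [hc], by simp⟩

lemma two_pow_le_card_minimum_oneTwoSets (k : ℕ) :
    2 ^ k ≤ #(univ.filter fun S : Finset (Option (Fin k × Fin 3)) =>
      IsOneTwoSet (spider k) S ∧ ∀ S', IsOneTwoSet (spider k) S' → #S ≤ #S') :=
  calc 2 ^ k = #(univ : Finset (Fin k → Fin 2)) := by simp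
    _ ≤ _ := card_le_card_of_injOn oneTwoSetOfChoice
      (fun f _ => mem_filter.mpr ⟨mem_univ _, isOneTwoSet_oneTwoSetOfChoice f, fun _ hS' =>
        (card_oneTwoSetOfChoice f).trans_le
          (card_le_of_forall_exists_adj fun _ hv => hS'.exists_adj_mem hv)⟩)
      oneTwoSetOfChoice_injective.injOn

end Spider

theorem num_min_oneTwoSets_not_poly_bounded (C d : ℕ) :
    ∃ k : ℕ, 1 ≤ k ∧
      C * (3 * k + 1) ^ d <
        (Finset.univ.filter
          (fun S : Finset (Option (Fin k × Fin 3)) =>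
            IsOneTwoSet (spider k) S ∧
            ∀ S' : Finset (Option (Fin k × Fin 3)),
              IsOneTwoSet (spider k) S' → S.card ≤ S'.card)).card := by
  obtain ⟨k, hk, hlt⟩ := exists_mul_pow_lt_two_pow C 3 d
  exact ⟨k, hk, hlt.trans_le (Spider.two_pow_le_card_minimum_oneTwoSets k)⟩
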